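/- arXiv:1801.00843 — 5 statements merged into one kernel-verified Lean document; each statement's English description precedes it below -/
import Mathlib

section
/- The 23-term expression S_{ℤ₄×ℤ₃} is a valid rank decomposition of the 3×3 matrix multiplication tensor: M⟨3⟩ = −a₀^⊗3 + Σ_{j=0}^{1} (a₀ʲ N a₀⁻ʲ)^⊗3 + Σ_{j=0}^{3} (a₀ʲ E₁₁ a₀⁻ʲ)^⊗3 + Σ_{j=0}^{3} (a₀ʲ M a₀⁻ʲ)^⊗3 + Σ_{cyc} Σ_{j=0}^{3} cyclic permutations of (a₀ʲ P a₀⁻ʲ)⊗(a₀ʲ Q a₀⁻ʲ)⊗(a₀ʲ R a₀⁻ʲ), where a₀ = [[0,0,-1],[1,0,-1],[0,1,-1]], N = [[0,1,0],[0,1,0],[0,0,0]], E₁₁ = [[1,0,0],[0,0,0],[0,0,0]], M = [[0,-1,0],[1,-1,0],[0,0,0]], P = [[0,0,0],[0,0,1],[0,0,0]], Q = [[0,0,0],[0,0,0],[-1,1,0]], R = [[0,0,0],[0,1,-1],[0,1,-1]]. Equivalently, evaluating both sides as trilinear forms: for all 3×3 matrices X,Y,Z, trace(XYZ) equals the corresponding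 sum of 23 products of linear forms. -/
/-!
Since `cnj (j + 1) A = a₀ * cnj j A * a₀⁻¹`, every coefficient matrix of the decomposition is
obtained from one of `N, E₁₁, M, P, Q, R` by iterating conjugation by `a₀`, which acts on the
entries of a 3×3 matrix by an explicit linear substitution. This turns all 23 coefficient matrices
into explicit integer matrices, and then both sides are cubic polynomials in the 27 entries of
`X, Y, Z` that coincide identically.
-/

namespace Stmt10

/-- a₀ = [[0,0,-1],[1,0,-1],[0,1,-1]] -/
noncomputable def a₀ : Matrix (Fin 3) (Fin 3) ℂ := !![0, 0, -1; 1, 0, -1; 0, 1, -1]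

/-- Conjugation by a₀ʲ. -/
noncomputable def cnj (j : ℕ) (M : Matrix (Fin 3) (Fin 3) ℂ) : Matrix (Fin 3) (Fin 3) ℂ :=
  a₀ ^ j * M * (a₀ ^ j)⁻¹

/-- The pairing of a coefficient matrix A with an argument matrix X:
the value of the linear form A on X, ⟨A,X⟩ = Σ_{i,j} A_{ij} X_{ij}. -/
noncomputable def pr (A X : Matrix (Fin 3) (Fin 3) ℂ) : ℂ := ∑ i, ∑ j, A i j * X i j

noncomputable def N : Matrix (Fin 3) (Fin 3) ℂ := !![0, 1, 0; 0, 1, 0; 0, 0, 0]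
noncomputable def E₁₁ : Matrix (Fin 3) (Fin 3) ℂ := !![1, 0, 0; 0, 0, 0; 0, 0, 0]
noncomputable def M : Matrix (Fin 3) (Fin 3) ℂ := !![0, -1, 0; 1, -1, 0; 0, 0, 0]
noncomputable def P : Matrix (Fin 3) (Fin 3) ℂ := !![0, 0, 0; 0, 0, 1; 0, 0, 0]
noncomputable def Q : Matrix (Fin 3) (Fin 3) ℂ := !![0, 0, 0; 0, 0, 0; -1, 1, 0]
noncomputable def R : Matrix (Fin 3) (Fin 3) ℂ := !![0, 0, 0; 0, 1, -1; 0, 1, -1]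

lemma a₀_inv : a₀⁻¹ = !![-1, 1, 0; -1, 0, 1; -1, 0, 0] :=
  Matrix.inv_eq_left_inv (by rw [a₀, Matrix.one_fin_three]; norm_num [Matrix.mul_fin_three])

lemma a₀_mul_mul_a₀_inv (a b c d e f g h i : ℂ) :
    a₀ * !![a, b, c; d, e, f; g, h, i] * a₀⁻¹ =
      !![g + h + i, -g, -h; g + h + i - (a + b + c), a - g, b - h;
        g + h + i - (d + e + f), d - g, e - h] := by
  rw [a₀_inv, a₀]
  ext i j
  fin_cases i <;> fin_cases j <;> simp [Matrix.mul_apply, Fin.sum_univ_three] <;> ring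

lemma cnj_zero (A : Matrix (Fin 3) (Fin 3) ℂ) : cnj 0 A = A := by
  simp [cnj]

lemma cnj_succ (j : ℕ) (A : Matrix (Fin 3) (Fin 3) ℂ) :
    cnj (j + 1) A = a₀ * cnj j A * a₀⁻¹ := by
  simp only [cnj, pow_succ', Matrix.mul_inv_rev, Matrix.mul_assoc]

lemma pr_fin_three (A X : Matrix (Fin 3) (Fin 3) ℂ) :
    pr A X = A 0 0 * X 0 0 + A 0 1 * X 0 1 + A 0 2 * X 0 2
      + A 1 0 * X 1 0 + A 1 1 * X 1 1 + A 1 2 * X 1 2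
      + A 2 0 * X 2 0 + A 2 1 * X 2 1 + A 2 2 * X 2 2 := by
  simp only [pr, Fin.sum_univ_three]; ring

/-- The 23-term expression S_{ℤ₄×ℤ₃} is a valid rank decomposition of the
3×3 matrix multiplication tensor, evaluated as trilinear forms: for all 3×3 complex
matrices X, Y, Z, trace(XYZ) equals the corresponding sum of 23 products of linear
forms, namely −a₀^⊗3, the ℤ₄/ℤ₂-orbit of N^⊗3 (2 terms), the ℤ₄-orbits of E₁₁^⊗3 and
M^⊗3 (4 terms each), and the ℤ₃×ℤ₄-orbit of P⊗Q⊗R (12 terms). -/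
theorem stmt_10 (X Y Z : Matrix (Fin 3) (Fin 3) ℂ) :
    (X * Y * Z).trace =
      -(pr a₀ X * pr a₀ Y * pr a₀ Z)
      + ∑ j ∈ Finset.range 2, pr (cnj j N) X * pr (cnj j N) Y * pr (cnj j N) Z
      + ∑ j ∈ Finset.range 4, pr (cnj j E₁₁) X * pr (cnj j E₁₁) Y * pr (cnj j E₁₁) Z
      + ∑ j ∈ Finset.range 4, pr (cnj j M) X * pr (cnj j M) Y * pr (cnj j M) Z
      + ∑ j ∈ Finset.range 4,
          (pr (cnj j P) X * pr (cnj j Q) Y * pr (cnj j R) Z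
            + pr (cnj j Q) X * pr (cnj j R) Y * pr (cnj j P) Z
            + pr (cnj j R) X * pr (cnj j P) Y * pr (cnj j Q) Z) := by
  simp only [Finset.sum_range_succ, Finset.sum_range_zero, cnj_succ, cnj_zero,
    N, E₁₁, M, P, Q, R, a₀_mul_mul_a₀_inv]
  norm_num only
  rw [a₀]
  simp only [pr_fin_three, Matrix.trace_fin_three, Matrix.mul_apply, Fin.sum_univ_three,
    Matrix.of_apply, Matrix.cons_val_zero, Matrix.cons_val_one, Matrix.cons_val_two,
    Matrix.head_cons, Matrix.tail_cons]
  ring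

end Stmt10
end

section
/- If (g, h, k) ∈ GL₃(ℂ)³ satisfies [a₀] = [g a₀ h⁻¹] = [h a₀ k⁻¹] = [k a₀ g⁻¹] in PGL₃ (i.e., these are equal up to nonzero scalars), then g, h, and k each commute with a₀, where a₀ = [[0,0,-1],[1,0,-1],[0,1,-1]]. -/
/-
Write a := a₀ and clear the inverses: g a = α a h, h a = β a k, k a = γ a g. Feeding the three
relations into one another gives g a³ = s a³ g with s = αβγ. Taking determinants gives s³ = 1,
and iterating four times with (a³)⁴ = 1 gives s⁴ = 1, so s = 1. Hence g commutes with a³, and so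
with a = (a³)³. Then a h = α⁻¹ g a = a (α⁻¹ g) forces h = α⁻¹ g, which commutes with a, and in the
same way k = β⁻¹ h.
-/

namespace Stmt13

noncomputable def a₀ : Matrix (Fin 3) (Fin 3) ℂ := !![0, 0, -1; 1, 0, -1; 0, 1, -1]

section Algebra

variable {R A : Type*} [CommRing R] [Ring A] [Algebra R A]

theorem mul_pow_three_eq_smul_of_cycle {x y z a : A} {α β γ : R}
    (hx : x * a = α • (a * y)) (hy : y * a = β • (a * z)) (hz : z * a = γ • (a * x)) :
    x * a ^ 3 = (α * β * γ) • (a ^ 3 * x) := by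
  calc x * a ^ 3 = x * a * a * a := by rw [pow_three, mul_assoc, mul_assoc]
    _ = α • (a * (y * a) * a) := by rw [hx, smul_mul_assoc, smul_mul_assoc, mul_assoc a y a]
    _ = (α * β) • (a * a * (z * a)) := by
      rw [hy, mul_smul_comm, smul_mul_assoc, smul_smul]
      simp only [mul_assoc]
    _ = (α * β * γ) • (a ^ 3 * x) := by
      rw [hz, mul_smul_comm, smul_smul, pow_three]
      simp only [mul_assoc]

theorem mul_pow_eq_smul_of_mul_eq_smul {x b : A} {s : R} (h : x * b = s • (b * x)) (m : ℕ) :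
    x * b ^ m = s ^ m • (b ^ m * x) := by
  have hsemi : SemiconjBy x b (s • b) := by rw [SemiconjBy, h, smul_mul_assoc]
  rw [(hsemi.pow_right m).eq, smul_pow, smul_mul_assoc]

theorem pow_eq_one_of_mul_eq_smul [IsDomain R] [Module.IsTorsionFree R A] {x b : A} {s : R}
    {m : ℕ} (hx : x ≠ 0) (hb : b ^ m = 1) (h : x * b = s • (b * x)) : s ^ m = 1 := by
  have hxs : (s ^ m - 1) • x = 0 := by
    rw [sub_smul, one_smul, ← one_mul x, ← hb, ← mul_pow_eq_smul_of_mul_eq_smul h, hb, mul_one,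
      one_mul, sub_self]
  exact sub_eq_zero.mp ((smul_eq_zero.mp hxs).resolve_right hx)

end Algebra

theorem commute_of_commute_of_mul_eq_smul {K A : Type*} [Field K] [Ring A] [Algebra K A]
    {a x y : A} {α : K} (ha : IsUnit a) (hα : α ≠ 0) (hx : Commute x a)
    (h : x * a = α • (a * y)) : Commute y a := by
  have hy : y = α⁻¹ • x := by
    refine ha.mul_left_cancel ?_
    rw [mul_smul_comm, ← hx.eq, h, inv_smul_smul₀ hα]
  exact hy ▸ hx.smul_left α⁻¹

section Matrix

variable {n K : Type*} [Fintype n] [DecidableEq n] [Field K]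

theorem Matrix.mul_eq_smul_mul_of_mul_nonsing_inv_eq {g a h : Matrix n n K} {α : K}
    (hh : IsUnit h) (e : g * a * h⁻¹ = α • a) : g * a = α • (a * h) := by
  rw [← Matrix.nonsing_inv_mul_cancel_right h (g * a) ((Matrix.isUnit_iff_isUnit_det h).mp hh),
    e, smul_mul_assoc]

theorem Matrix.pow_card_eq_one_of_mul_eq_smul {g b : Matrix n n K} {s : K}
    (hg : IsUnit g) (hb : IsUnit b) (h : g * b = s • (b * g)) : s ^ Fintype.card n = 1 := by
  have hdet : g.det * b.det ≠ 0 :=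
    mul_ne_zero ((Matrix.isUnit_iff_isUnit_det g).mp hg).ne_zero
      ((Matrix.isUnit_iff_isUnit_det b).mp hb).ne_zero
  have hd := congrArg Matrix.det h
  rw [Matrix.det_smul, Matrix.det_mul, Matrix.det_mul, mul_comm b.det] at hd
  exact (mul_eq_right₀ hdet).mp hd.symm

theorem Matrix.eq_one_of_mul_eq_smul [Nonempty n] {g b : Matrix n n K} {s : K} {m : ℕ}
    (hg : IsUnit g) (hb : IsUnit b) (hbm : b ^ m = 1) (hcop : (Fintype.card n).Coprime m)
    (h : g * b = s • (b * g)) : s = 1 := by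
  have hs : s ^ (Fintype.card n).gcd m = 1 :=
    pow_gcd_eq_one.mpr ⟨Matrix.pow_card_eq_one_of_mul_eq_smul hg hb h,
      pow_eq_one_of_mul_eq_smul hg.ne_zero hbm h⟩
  rwa [hcop, pow_one] at hs

end Matrix

theorem a₀_pow_four : a₀ ^ 4 = 1 := by
  rw [Matrix.one_fin_three]
  norm_num [a₀, pow_succ, Matrix.mul_fin_three]

theorem isUnit_a₀ : IsUnit a₀ := IsUnit.of_pow_eq_one a₀_pow_four (by norm_num)

theorem a₀_pow_three_pow_four : (a₀ ^ 3) ^ 4 = 1 := by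
  rw [← pow_mul, mul_comm, pow_mul, a₀_pow_four, one_pow]

theorem Commute.of_pow_three_of_pow_four {M : Type*} [Monoid M] {g a : M} (ha : a ^ 4 = 1)
    (hg : Commute g (a ^ 3)) : Commute g a := by
  have ha' : (a ^ 3) ^ 3 = a := by
    rw [← pow_mul, show 3 * 3 = 4 * 2 + 1 by rfl, pow_succ, pow_mul, ha, one_pow, one_mul]
  exact ha' ▸ hg.pow_right 3

theorem stmt_13_general (g h k : Matrix (Fin 3) (Fin 3) ℂ)
    (hg : IsUnit g) (hh : IsUnit h) (hk : IsUnit k)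
    (α β γ : ℂ) (hα : α ≠ 0) (hβ : β ≠ 0)
    (h1 : g * a₀ * h⁻¹ = α • a₀)
    (h2 : h * a₀ * k⁻¹ = β • a₀)
    (h3 : k * a₀ * g⁻¹ = γ • a₀) :
    g * a₀ = a₀ * g ∧ h * a₀ = a₀ * h ∧ k * a₀ = a₀ * k := by
  have e1 := Matrix.mul_eq_smul_mul_of_mul_nonsing_inv_eq hh h1
  have e2 := Matrix.mul_eq_smul_mul_of_mul_nonsing_inv_eq hk h2
  have e3 := Matrix.mul_eq_smul_mul_of_mul_nonsing_inv_eq hg h3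
  have hcycle := mul_pow_three_eq_smul_of_cycle e1 e2 e3
  have hs : α * β * γ = 1 :=
    Matrix.eq_one_of_mul_eq_smul hg (isUnit_a₀.pow 3) a₀_pow_three_pow_four (by decide)
      hcycle
  have hga : Commute g a₀ :=
    Commute.of_pow_three_of_pow_four a₀_pow_four (by rwa [hs, one_smul] at hcycle)
  have hha := commute_of_commute_of_mul_eq_smul isUnit_a₀ hα hga e1
  exact ⟨hga, hha, commute_of_commute_of_mul_eq_smul isUnit_a₀ hβ hha e2⟩

/-- If (g,h,k) ∈ GL₃(ℂ)³ satisfies [a₀] = [g a₀ h⁻¹] = [h a₀ k⁻¹] = [k a₀ g⁻¹]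
in PGL₃ (equality up to nonzero scalars), then g, h, and k each commute with a₀. -/
theorem stmt_13 (g h k : Matrix (Fin 3) (Fin 3) ℂ)
    (hg : IsUnit g) (hh : IsUnit h) (hk : IsUnit k)
    (α β γ : ℂ) (hα : α ≠ 0) (hβ : β ≠ 0) (hγ : γ ≠ 0)
    (h1 : g * a₀ * h⁻¹ = α • a₀)
    (h2 : h * a₀ * k⁻¹ = β • a₀)
    (h3 : k * a₀ * g⁻¹ = γ • a₀) :
    g * a₀ = a₀ * g ∧ h * a₀ = a₀ * h ∧ k * a₀ = a₀ * k :=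
  stmt_13_general g h k hg hh hk α β γ hα hβ h1 h2 h3

end Stmt13
end

section
/- Every cube root a of a₀⁻¹ in GL₃(ℂ) has three distinct eigenvalues, and there are exactly 27 matrices a ∈ GL₃(ℂ) with a³ = a₀⁻¹, where a₀ = [[0,0,-1],[1,0,-1],[0,1,-1]]. -/
/-! Conjugating by an eigenbasis turns a cube root `a` of `a₀⁻¹` into a cube root `b` of the
diagonal matrix `D = diag(-1, i, -i)`. Since `b` commutes with `b³ = D` and `D` has distinct
diagonal entries, `b` is itself diagonal, with entries cube roots of `-1`, `i`, `-i`. These entries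
are distinct because their cubes are, and each of them can be chosen in three ways, giving
`3³ = 27` cube roots. -/

namespace Stmt15

noncomputable def a₀ : Matrix (Fin 3) (Fin 3) ℂ := !![0, 0, -1; 1, 0, -1; 0, 1, -1]

open Matrix Polynomial Finset Complex

theorem _root_.IsPrimitiveRoot.card_nthRootsFinset_of_ne_zero {R : Type*} [CommRing R]
    [IsDomain R] {ζ : R} {k : ℕ} (hζ : IsPrimitiveRoot ζ k) {a : R} (ha : a ≠ 0)
    (hroot : ∃ α, α ^ k = a) :
    #(nthRootsFinset k a) = k := by
  classical
  rw [nthRootsFinset_def, Multiset.toFinset_card_of_nodup (hζ.nthRoots_nodup ha),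
    hζ.card_nthRoots, if_pos hroot]

theorem _root_.Complex.card_nthRootsFinset {k : ℕ} (hk : k ≠ 0) {z : ℂ} (hz : z ≠ 0) :
    #(nthRootsFinset k z) = k :=
  (isPrimitiveRoot_exp k hk).card_nthRootsFinset_of_ne_zero hz
    (IsAlgClosed.exists_pow_nat_eq z (Nat.pos_of_ne_zero hk))

theorem _root_.Units.inv_mul_mul_eq_iff {M : Type*} [Monoid M] (u : Mˣ) (a c : M) :
    ↑u⁻¹ * a * u = c ↔ a = u * c * ↑u⁻¹ := by
  constructor <;> rintro rfl <;> simp [mul_assoc]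

section
variable {n K : Type*} [Fintype n] [DecidableEq n] [CommRing K] [IsDomain K]

theorem eq_diagonal_of_commute_diagonal {d : n → K} (hd : Function.Injective d)
    {b : Matrix n n K} (h : Commute b (diagonal d)) : b = diagonal fun i => b i i := by
  ext i j
  rcases eq_or_ne i j with rfl | hij
  · simp
  · have hij' : b i j * d j = d i * b i j := by
      simpa [mul_diagonal, diagonal_mul] using congr_fun₂ h.eq i j
    have : (d j - d i) * b i j = 0 := by linear_combination hij'
    simpa [diagonal_apply_ne _ hij, sub_ne_zero.2 (hd.ne hij).symm] using this

theorem pow_eq_diagonal_iff {d : n → K} (hd : Function.Injective d) (k : ℕ) (b : Matrix n n K) :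
    b ^ k = diagonal d ↔ ∃ x : n → K, (∀ i, x i ^ k = d i) ∧ b = diagonal x := by
  constructor
  · intro h
    have hb := eq_diagonal_of_commute_diagonal hd (h ▸ Commute.self_pow b k)
    refine ⟨_, fun i => ?_, hb⟩
    rw [hb, diagonal_pow] at h
    exact congr_fun (diagonal_injective h) i
  · rintro ⟨x, hx, rfl⟩
    rw [diagonal_pow]
    exact congr_arg diagonal (funext hx)

theorem setOf_pow_eq_units_conj_diagonal (u : (Matrix n n K)ˣ) {d : n → K}
    (hd : Function.Injective d) (k : ℕ) :
    {a | a ^ k = u * diagonal d * (↑u⁻¹ : Matrix n n K)} =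
      (fun x : n → K => u * diagonal x * (↑u⁻¹ : Matrix n n K)) '' {x | ∀ i, x i ^ k = d i} := by
  ext a
  rw [Set.mem_ofPred_eq, ← Units.inv_mul_mul_eq_iff, ← Units.conj_pow', pow_eq_diagonal_iff hd]
  simp only [Units.inv_mul_mul_eq_iff, Set.mem_image, Set.mem_ofPred_eq, eq_comm]

theorem roots_charpoly_diagonal (x : n → K) :
    (diagonal x).charpoly.roots = univ.val.map x := by
  rw [charpoly_diagonal, ← roots_multiset_prod_X_sub_C (univ.val.map x), Multiset.map_map]
  rfl

theorem roots_charpoly_nodup_and_card_of_pow_eq_units_conj_diagonal (u : (Matrix n n K)ˣ)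
    {d : n → K} (hd : Function.Injective d) {k : ℕ} {a : Matrix n n K}
    (ha : a ^ k = u * diagonal d * (↑u⁻¹ : Matrix n n K)) :
    a.charpoly.roots.Nodup ∧ Multiset.card a.charpoly.roots = Fintype.card n := by
  obtain ⟨x, hx, rfl⟩ := (setOf_pow_eq_units_conj_diagonal u hd k).subset ha
  have hxd : (· ^ k) ∘ x = d := funext hx
  have hx_inj : Function.Injective x := .of_comp (hxd ▸ hd)
  rw [coe_units_inv, charpoly_units_conj, roots_charpoly_diagonal]
  exact ⟨univ.nodup.map hx_inj, by simp⟩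

end

theorem ncard_setOf_forall_pow_eq {n : Type*} [Fintype n] [DecidableEq n] {k : ℕ} (hk : k ≠ 0)
    {d : n → ℂ} (hd : ∀ i, d i ≠ 0) :
    {x : n → ℂ | ∀ i, x i ^ k = d i}.ncard = k ^ Fintype.card n := by
  have : {x : n → ℂ | ∀ i, x i ^ k = d i} = Fintype.piFinset fun i => nthRootsFinset k (d i) := by
    ext x
    simp [mem_nthRootsFinset (Nat.pos_of_ne_zero hk)]
  rw [this, Set.ncard_coe_finset, Fintype.card_piFinset]
  simp [Complex.card_nthRootsFinset hk (hd _)]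

theorem ncard_setOf_pow_eq_units_conj_diagonal {n : Type*} [Fintype n] [DecidableEq n]
    (u : (Matrix n n ℂ)ˣ) {d : n → ℂ} (hd : Function.Injective d) (hd₀ : ∀ i, d i ≠ 0)
    {k : ℕ} (hk : k ≠ 0) :
    {a | a ^ k = u * diagonal d * (↑u⁻¹ : Matrix n n ℂ)}.ncard = k ^ Fintype.card n := by
  have hconj : Function.Injective fun x : n → ℂ => u * diagonal x * (↑u⁻¹ : Matrix n n ℂ) :=
    (Units.isUnit u⁻¹).mul_left_injective.comp
      ((Units.isUnit u).mul_right_injective.comp diagonal_injective)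
  rw [setOf_pow_eq_units_conj_diagonal u hd, Set.ncard_image_of_injective _ hconj,
    ncard_setOf_forall_pow_eq hk hd₀]

noncomputable def eigenbasis : (Matrix (Fin 3) (Fin 3) ℂ)ˣ where
  val := !![1, -I, I; 0, 1 - I, 1 + I; 1, 1, 1]
  inv := !![1 / 2, -1 / 2, 1 / 2; (-1 + I) / 4, (1 + I) / 4, (1 - I) / 4;
    (-1 - I) / 4, (1 - I) / 4, (1 + I) / 4]
  val_inv := by
    rw [mul_fin_three, one_fin_three]
    ext i j
    fin_cases i <;> fin_cases j <;> simp [Complex.ext_iff] <;> norm_num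
  inv_val := by
    rw [mul_fin_three, one_fin_three]
    ext i j
    fin_cases i <;> fin_cases j <;> simp [Complex.ext_iff] <;> norm_num

theorem inv_a₀_eq :
    a₀⁻¹ = eigenbasis * diagonal ![-1, I, -I] * (↑eigenbasis⁻¹ : Matrix (Fin 3) (Fin 3) ℂ) := by
  refine inv_eq_right_inv ?_
  simp only [a₀, eigenbasis, diagonal_fin_three, mul_fin_three, one_fin_three]
  ext i j
  fin_cases i <;> fin_cases j <;> simp [Complex.ext_iff] <;> norm_num

theorem eigenvalues_injective : Function.Injective ![(-1 : ℂ), I, -I] := by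
  intro i j h
  fin_cases i <;> fin_cases j <;> simp_all [Complex.ext_iff] <;> norm_num at h

/-- Every cube root a of a₀⁻¹ in GL₃(ℂ) has three distinct eigenvalues
(its characteristic polynomial has three distinct roots), and there are exactly
27 matrices a with a³ = a₀⁻¹. -/
theorem stmt_15 :
    (∀ a : Matrix (Fin 3) (Fin 3) ℂ, a ^ 3 = a₀⁻¹ →
      (Matrix.charpoly a).roots.Nodup ∧ Multiset.card (Matrix.charpoly a).roots = 3) ∧
    {a : Matrix (Fin 3) (Fin 3) ℂ | a ^ 3 = a₀⁻¹}.ncard = 27 := by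
  rw [inv_a₀_eq]
  refine ⟨fun a ha => ?_, ?_⟩
  · simpa using
      roots_charpoly_nodup_and_card_of_pow_eq_units_conj_diagonal _ eigenvalues_injective ha
  · refine ncard_setOf_pow_eq_units_conj_diagonal _ eigenvalues_injective ?_ three_ne_zero
    intro i
    fin_cases i <;> simp

end Stmt15
end

section
/- The group of diagonal-conjugation symmetries of the decomposition S_{2fix-ℤ₃} of M⟨3⟩ is trivial: specifically, if a matrix g ∈ GL₃(ℂ) commutes with M₁₂ = [[1,0,0],[0,0,1],[0,0,1]], M₁₃ = [[0,0,0],[0,1,-1],[0,0,0]], M₁₄ₐ = [[0,1,0],[0,0,1],[0,0,0]], M₁₄_b = [[0,0,0],[0,1,-1],[0,1,-1]], and M₁₄_c = [[0,0,0],[1,0,-1],[0,0,0]], then g is a scalar multiple of the identity. -/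
namespace Stmt16

noncomputable def M₁₂ : Matrix (Fin 3) (Fin 3) ℂ := !![1, 0, 0; 0, 0, 1; 0, 0, 1]
noncomputable def M₁₃ : Matrix (Fin 3) (Fin 3) ℂ := !![0, 0, 0; 0, 1, -1; 0, 0, 0]
noncomputable def M₁₄a : Matrix (Fin 3) (Fin 3) ℂ := !![0, 1, 0; 0, 0, 1; 0, 0, 0]
noncomputable def M₁₄b : Matrix (Fin 3) (Fin 3) ℂ := !![0, 0, 0; 0, 1, -1; 0, 1, -1]
noncomputable def M₁₄c : Matrix (Fin 3) (Fin 3) ℂ := !![0, 0, 0; 1, 0, -1; 0, 0, 0]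

/-- If a matrix g ∈ GL₃(ℂ) commutes with M₁₂, M₁₃, M₁₄ₐ, M₁₄_b and M₁₄_c,
then g is a scalar multiple of the identity (so the group of diagonal-conjugation
symmetries of the decomposition S_{2fix-ℤ₃} is trivial). -/
theorem stmt_16 (g : Matrix (Fin 3) (Fin 3) ℂ) (hg : IsUnit g)
    (h1 : g * M₁₂ = M₁₂ * g) (h2 : g * M₁₃ = M₁₃ * g)
    (h3 : g * M₁₄a = M₁₄a * g) (h4 : g * M₁₄b = M₁₄b * g)
    (h5 : g * M₁₄c = M₁₄c * g) :
    ∃ c : ℂ, g = c • (1 : Matrix (Fin 3) (Fin 3) ℂ) := by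
  have a01 := congrFun (congrFun h1 0) 1
  have a12 := congrFun (congrFun h1 1) 2
  have a10 := congrFun (congrFun h1 1) 0
  have a11 := congrFun (congrFun h1 1) 1
  have c00 := congrFun (congrFun h3 0) 0
  have c01 := congrFun (congrFun h3 0) 1
  have c02 := congrFun (congrFun h3 0) 2
  have d01 := congrFun (congrFun h4 0) 1
  simp [M₁₂, M₁₄a, M₁₄b, Matrix.mul_apply, Fin.sum_univ_three, Matrix.vecHead, Matrix.vecTail] at a01 a12 a10 a11 c00 c01 c02 d01
  have e00 : g 0 0 = g 2 2 := by linear_combination a01 + a12 + c01 + c02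
  have e01 : g 0 1 = 0 := by linear_combination -a01
  have e02 : g 0 2 = 0 := by linear_combination a01 + d01
  have e10 : g 1 0 = 0 := by linear_combination -c00
  have e11 : g 1 1 = g 2 2 := by linear_combination a01 + a12 + c02
  have e12 : g 1 2 = 0 := by linear_combination -a01 - c02
  have e20 : g 2 0 = 0 := by linear_combination -a10 - c00
  have e21 : g 2 1 = 0 := by linear_combination -a11
  refine ⟨g 2 2, ?_⟩
  ext i j
  fin_cases i <;> fin_cases j <;>
    simp [Matrix.one_apply, e00, e01, e02, e10, e11, e12, e20, e21]
end Stmt16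
end

section
/- The 23-term ℤ₃-invariant decomposition S_{2fix-ℤ₃} is a valid rank decomposition of M⟨3⟩: it consists of the two cubes M₁₂^⊗3 and M₁₃^⊗3 with M₁₂ = [[1,0,0],[0,0,1],[0,0,1]], M₁₃ = [[0,0,0],[0,1,-1],[0,0,0]], together with the cyclic ℤ₃-orbits (each of size 3) of the seven triples listed in equations (twofix_c3)–(twofix_c9), and the sum of all 23 resulting rank-one tensors equals the trilinear form (X,Y,Z) ↦ trace(XYZ) on 3×3 matrices. -/
namespace Stmt17

/-- The pairing of a coefficient matrix A with an argument matrix X: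
⟨A,X⟩ = Σ_{i,j} A_{ij} X_{ij}. -/
noncomputable def pr (A X : Matrix (Fin 3) (Fin 3) ℂ) : ℂ := ∑ i, ∑ j, A i j * X i j

/-- The value on (X,Y,Z) of the ℤ₃-orbit {A⊗B⊗C, B⊗C⊗A, C⊗A⊗B} of a rank-one tensor. -/
noncomputable def orb3 (A B C X Y Z : Matrix (Fin 3) (Fin 3) ℂ) : ℂ :=
  pr A X * pr B Y * pr C Z + pr B X * pr C Y * pr A Z + pr C X * pr A Y * pr B Z

noncomputable def M₁₂ : Matrix (Fin 3) (Fin 3) ℂ := !![1, 0, 0; 0, 0, 1; 0, 0, 1]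
noncomputable def M₁₃ : Matrix (Fin 3) (Fin 3) ℂ := !![0, 0, 0; 0, 1, -1; 0, 0, 0]

/-- The 23-term ℤ₃-invariant decomposition S_{2fix-ℤ₃} is a valid rank
decomposition of M⟨3⟩: the two cubes M₁₂^⊗3 and M₁₃^⊗3 together with the cyclic
ℤ₃-orbits (each of size 3) of the seven listed triples sum, as trilinear forms,
to (X,Y,Z) ↦ trace(XYZ). -/
theorem stmt_17 (X Y Z : Matrix (Fin 3) (Fin 3) ℂ) :
    (X * Y * Z).trace =
      pr M₁₂ X * pr M₁₂ Y * pr M₁₂ Z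
      + pr M₁₃ X * pr M₁₃ Y * pr M₁₃ Z
      + orb3 !![0, 1, 0; 0, 0, 1; 0, 0, 0] !![0, 0, 0; 0, 1, -1; 0, 1, -1]
          !![0, 0, 0; 1, 0, -1; 0, 0, 0] X Y Z
      + orb3 !![0, -1, 1; 0, 0, 0; 0, 0, 0] !![0, 0, 0; 0, 0, 0; 0, 0, 1]
          !![0, 0, 0; 0, 0, 0; 1, 0, 0] X Y Z
      + orb3 !![1, 0, 0; 1, 0, 0; 0, 0, 0] !![0, -1, 1; 0, 0, 0; 0, 0, 0]
          !![0, 0, 0; 0, 0, 0; 0, 1, 0] X Y Z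
      + orb3 !![1, 0, 0; 0, 0, 1; 0, 0, 0] !![0, 1, 0; 0, 0, 1; 0, 0, 1]
          !![0, 0, 0; 1, 0, -1; 0, 1, -1] X Y Z
      + orb3 !![1, 0, 0; 0, 0, 0; 0, 0, 0] !![0, 0, 1; 0, 0, 1; 0, 0, 1]
          !![0, 0, 0; 0, 0, 0; 1, -1, 0] X Y Z
      + orb3 !![0, 0, 0; 0, 0, 1; 0, 0, 0] !![0, 1, 0; 0, 1, 0; 0, 1, 0]
          !![0, 0, 0; -1, 1, 0; 0, 0, 0] X Y Z
      + orb3 !![0, 0, 0; 0, 0, 1; 0, 0, 1] !![1, 0, 0; 1, 0, 0; 1, 0, 0]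
          !![-1, 1, 0; 0, 0, 0; 0, 0, 0] X Y Z := by
  simp only [pr, orb3, M₁₂, M₁₃, Matrix.trace, Matrix.diag, Matrix.mul_apply,
    Fin.sum_univ_succ, Fin.sum_univ_zero, Matrix.cons_val_zero, Matrix.cons_val_one,
    Matrix.head_cons, Matrix.cons_val', Matrix.empty_val', Matrix.cons_val_fin_one,
    Matrix.head_fin_const, Matrix.of_apply, Matrix.cons_val_succ, Matrix.head_val']
  ring

end Stmt17
end
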